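/- Let t > s and let y₁, …, y_N ∈ ℝ² be pairwise distinct and α₁, …, α_N : ℝ → ℝ continuously differentiable. Then for every pair (j,k), the function τ ↦ K_{jk}(t,τ) is Lebesgue integrable on (s, t), where K_{jj}(t,τ) := 4π I(t−τ) (α_j(τ) − (1/2π) log 2 + γ/(2π)) and, for j ≠ k, K_{jk}(t,τ) := −2i I(t−τ) · lim_{ε→0⁺} ∫ₛ^{τ−ε} U₀(τ−σ; |y_j − y_k|) dσ. -/

import Mathlib

open MeasureTheory Real Filter

/-- The Volterra function of order `-1`: `I(t) = ∫₀^∞ t^(σ-1)/Γ(σ) dσ`. -/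
noncomputable def volterraI (t : ℝ) : ℝ :=
  ∫ σ in Set.Ioi (0 : ℝ), t ^ (σ - 1) / Real.Gamma σ

/-- The integral kernel of the free two-dimensional Schrödinger propagator `e^{iΔt}`
at time `t` and distance `r`: `U₀(t; r) = e^{i r²/(4t)} / (2 i t)`. -/
noncomputable def U0 (t r : ℝ) : ℂ :=
  Complex.exp (Complex.I * r ^ 2 / (4 * t)) / (2 * Complex.I * t)

/-- The improper integral `lim_{ε→0⁺} ∫ₛ^{τ-ε} U₀(τ-σ; a) dσ`. -/
noncomputable def freeImproper (s τ a : ℝ) : ℂ :=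
  limUnder (nhdsWithin 0 (Set.Ioi 0)) (fun ε : ℝ => ∫ σ in s..(τ - ε), U0 (τ - σ) a)

/-- The matrix-valued kernel of the charge equation. -/
noncomputable def chargeKernel {N : ℕ} (y : Fin N → EuclideanSpace ℝ (Fin 2))
    (α : Fin N → ℝ → ℝ) (s t τ : ℝ) : Matrix (Fin N) (Fin N) ℂ :=
  fun j k =>
    if j = k then
      ((4 * Real.pi * volterraI (t - τ) *
        (α j τ - (1 / (2 * Real.pi)) * Real.log 2 +
          Real.eulerMascheroniConstant / (2 * Real.pi)) : ℝ) : ℂ)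
    else
      -2 * Complex.I * (volterraI (t - τ) : ℂ) * freeImproper s τ ‖y j - y k‖

/-!
Every entry is `I(t - τ)` times a factor continuous on `[s, t]`, so it suffices that `I` is
integrable near `0`. By Tonelli, `∫₀^T I = ∫₀^∞ T^σ / Γ(σ + 1) dσ`, which converges since
`Γ(σ + 1) ≥ A^σ e^{-A}` for every `A ≥ 0`; the choice `A = eT` gives the bound
`e^{eT} e^{-σ}`.

For `j ≠ k` the improper integral has a closed form. With `e(u) = exp(i a² / (4u))`, the
kernel `(a² / 2) U₀(u; a)` is the derivative of `P(u) = u e(u) - ∫₀^u e`, and `P` is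
continuous with `P(0) = 0` because `|e| = 1`; hence the limit equals `(2 / a²) P(τ - s)`.
Below, `e = freePhase a` and `P = freePrimitive a`.
-/

open Set

lemma rpow_mul_exp_neg_le_Gamma {x A : ℝ} (hx : 1 ≤ x) (hA : 0 ≤ A) :
    A ^ (x - 1) * exp (-A) ≤ Gamma x := by
  have hint : IntegrableOn (fun t => exp (-t) * t ^ (x - 1)) (Ioi 0) :=
    GammaIntegral_convergent (by linarith)
  calc A ^ (x - 1) * exp (-A) = ∫ t in Ioi A, exp (-t) * A ^ (x - 1) := by
        rw [integral_mul_const, integral_exp_neg_Ioi, mul_comm]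
    _ ≤ ∫ t in Ioi A, exp (-t) * t ^ (x - 1) := by
        refine setIntegral_mono_on ((integrableOn_exp_neg_Ioi A).mul_const _)
          (hint.mono_set (Ioi_subset_Ioi hA)) measurableSet_Ioi fun t ht => ?_
        exact mul_le_mul_of_nonneg_left (rpow_le_rpow hA (le_of_lt ht) (by linarith)) (exp_nonneg _)
    _ ≤ ∫ t in Ioi 0, exp (-t) * t ^ (x - 1) :=
        setIntegral_mono_set hint
          (ae_restrict_of_forall_mem measurableSet_Ioi fun t ht =>
            mul_nonneg (exp_nonneg _) (rpow_nonneg (le_of_lt ht) _))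
          (Ioi_subset_Ioi hA).eventuallyLE
    _ = Gamma x := (Gamma_eq_integral (by linarith)).symm

lemma rpow_div_Gamma_add_one_le {T σ : ℝ} (hT : 0 < T) (hσ : 0 ≤ σ) :
    T ^ σ / Gamma (σ + 1) ≤ exp (exp 1 * T) * exp (-σ) := by
  have hΓ := rpow_mul_exp_neg_le_Gamma (x := σ + 1) (by linarith)
    (by positivity : 0 ≤ exp 1 * T)
  rw [add_sub_cancel_right, mul_rpow (exp_pos 1).le hT.le, exp_one_rpow] at hΓ
  calc T ^ σ / Gamma (σ + 1) ≤ T ^ σ / (exp σ * T ^ σ * exp (-(exp 1 * T))) :=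
        div_le_div_of_nonneg_left (by positivity) (by positivity) hΓ
    _ = exp (exp 1 * T) * exp (-σ) := by
        rw [exp_neg, exp_neg]
        field_simp [(rpow_pos_of_pos hT σ).ne']

lemma integrableOn_rpow_div_Gamma_add_one {T : ℝ} (hT : 0 < T) :
    IntegrableOn (fun σ => T ^ σ / Gamma (σ + 1)) (Ioi 0) := by
  have hΓ : ContinuousOn (fun σ => Gamma (σ + 1)) (Ioi 0) :=
    differentiableOn_Gamma_Ioi.continuousOn.comp (continuousOn_id.add continuousOn_const)
      fun _ hσ => mem_Ioi.2 (add_pos hσ one_pos)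
  refine Integrable.mono' ((integrableOn_exp_neg_Ioi 0).const_mul (exp (exp 1 * T))) ?_ ?_
  · refine ContinuousOn.aestronglyMeasurable ?_ measurableSet_Ioi
    exact (continuous_const.rpow continuous_id fun _ => Or.inl hT.ne').continuousOn.div hΓ
      fun _ hσ => (Gamma_pos_of_pos (add_pos hσ one_pos)).ne'
  · refine ae_restrict_of_forall_mem measurableSet_Ioi fun σ (hσ : 0 < σ) => ?_
    rw [norm_of_nonneg (div_nonneg (rpow_nonneg hT.le σ) (Gamma_pos_of_pos (by linarith)).le)]
    simpa using rpow_div_Gamma_add_one_le hT hσ.le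

lemma integral_rpow_div_Gamma {T σ : ℝ} (hT : 0 ≤ T) (hσ : 0 < σ) :
    ∫ u in Ioo 0 T, u ^ (σ - 1) / Gamma σ = T ^ σ / Gamma (σ + 1) := by
  rw [integral_div, ← integral_Ioc_eq_integral_Ioo, ← intervalIntegral.integral_of_le hT,
    integral_rpow (Or.inl (by linarith)), sub_add_cancel, zero_rpow hσ.ne', sub_zero,
    Gamma_add_one hσ.ne', div_div]

lemma integrableOn_volterraI_Ioo {T : ℝ} (hT : 0 < T) : IntegrableOn volterraI (Ioo 0 T) := by
  set f : ℝ × ℝ → ℝ := fun p => p.2 ^ (p.1 - 1) / Gamma p.1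
  set μ := (volume.restrict (Ioi (0 : ℝ))).prod (volume.restrict (Ioo 0 T)) with hμ
  have hf : AEStronglyMeasurable f μ := by
    rw [hμ, Measure.prod_restrict]
    refine ContinuousOn.aestronglyMeasurable ?_ (measurableSet_Ioi.prod measurableSet_Ioo)
    refine ContinuousOn.div ?_ (differentiableOn_Gamma_Ioi.continuousOn.comp continuousOn_fst
      fun p hp => hp.1) fun p hp => (Gamma_pos_of_pos hp.1).ne'
    exact continuousOn_snd.rpow (continuousOn_fst.sub continuousOn_const)
      fun p hp => Or.inl hp.2.1.ne'
  have hfσ : ∀ σ ∈ Ioi (0 : ℝ),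
      ∫ u in Ioo 0 T, ‖f (σ, u)‖ = T ^ σ / Gamma (σ + 1) := by
    intro σ hσ
    rw [← integral_rpow_div_Gamma hT.le hσ]
    refine setIntegral_congr_fun measurableSet_Ioo fun u hu => norm_of_nonneg ?_
    exact div_nonneg (rpow_nonneg hu.1.le _) (Gamma_pos_of_pos hσ).le
  have hprod : Integrable f μ := by
    refine (integrable_prod_iff hf).2
      ⟨ae_restrict_of_forall_mem measurableSet_Ioi fun σ hσ => ?_, ?_⟩
    · have := intervalIntegral.intervalIntegrable_rpow' (a := 0) (b := T)
        (show -1 < σ - 1 by linarith [mem_Ioi.1 hσ])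
      show Integrable (fun u => u ^ (σ - 1) / Gamma σ) _
      exact ((intervalIntegrable_iff_integrableOn_Ioo_of_le hT.le).1 this).div_const _
    · exact (integrableOn_rpow_div_Gamma_add_one hT).congr_fun (fun σ hσ => (hfσ σ hσ).symm)
        measurableSet_Ioi
  exact hprod.integral_prod_right

lemma integrableOn_volterraI_sub {s t : ℝ} (hst : s < t) :
    IntegrableOn (fun τ => volterraI (t - τ)) (Ioo s t) := by
  have h := ((intervalIntegrable_iff_integrableOn_Ioo_of_le (sub_pos.2 hst).le).2
    (integrableOn_volterraI_Ioo (sub_pos.2 hst))).comp_sub_left t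
  rw [sub_zero, sub_sub_cancel] at h
  exact (intervalIntegrable_iff_integrableOn_Ioo_of_le hst.le).1 h.symm

noncomputable def freePhase (a u : ℝ) : ℂ := Complex.exp (Complex.I * a ^ 2 / (4 * u))

noncomputable def freePrimitive (a d : ℝ) : ℂ :=
  d * freePhase a d - ∫ u in (0 : ℝ)..d, freePhase a u

lemma norm_freePhase (a u : ℝ) : ‖freePhase a u‖ = 1 := by
  rw [freePhase, Complex.norm_exp]
  simp [Complex.div_re, ← Complex.ofReal_pow]

lemma measurable_freePhase (a : ℝ) : Measurable (freePhase a) := by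
  unfold freePhase; fun_prop

lemma continuousAt_freePhase (a : ℝ) {u : ℝ} (hu : u ≠ 0) : ContinuousAt (freePhase a) u := by
  unfold freePhase; fun_prop (disch := simp [hu])

lemma continuousAt_U0 (a : ℝ) {u : ℝ} (hu : u ≠ 0) : ContinuousAt (fun v => U0 v a) u := by
  unfold U0; fun_prop (disch := simp [hu])

lemma intervalIntegrable_freePhase (a c d : ℝ) : IntervalIntegrable (freePhase a) volume c d :=
  intervalIntegrable_const.mono_fun' (measurable_freePhase a).aestronglyMeasurable
    (ae_of_all _ fun u => (norm_freePhase a u).le)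

lemma continuous_mul_freePhase (a : ℝ) : Continuous fun d : ℝ => (d : ℂ) * freePhase a d := by
  refine continuous_iff_continuousAt.2 fun d => ?_
  rcases eq_or_ne d 0 with rfl | hd
  · rw [ContinuousAt, Complex.ofReal_zero, zero_mul]
    refine squeeze_zero_norm (fun v => ?_) (continuous_abs.tendsto' 0 0 abs_zero)
    simp [norm_freePhase]
  · exact Complex.continuous_ofReal.continuousAt.mul (continuousAt_freePhase a hd)

lemma continuous_freePrimitive (a : ℝ) : Continuous (freePrimitive a) :=
  (continuous_mul_freePhase a).sub
    (intervalIntegral.continuous_primitive (intervalIntegrable_freePhase a) 0)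

lemma hasDerivAt_freePrimitive (a : ℝ) {u : ℝ} (hu : u ≠ 0) :
    HasDerivAt (freePrimitive a) (a ^ 2 / 2 * U0 u a) u := by
  have hu' : (u : ℂ) ≠ 0 := Complex.ofReal_ne_zero.2 hu
  have hphase : HasDerivAt (fun z : ℂ => z * Complex.exp (Complex.I * a ^ 2 / (4 * z)))
      (1 * freePhase a u + u * (freePhase a u * (Complex.I * a ^ 2 / 4 * -((u : ℂ) ^ 2)⁻¹))) u := by
    have hfun : (fun z : ℂ => Complex.I * a ^ 2 / (4 * z)) =
        fun z => Complex.I * a ^ 2 / 4 * z⁻¹ := by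
      ext z; ring
    refine (hasDerivAt_id _).mul (HasDerivAt.cexp ?_)
    rw [hfun]
    exact (hasDerivAt_inv hu').const_mul _
  have hint := intervalIntegral.integral_hasDerivAt_right (intervalIntegrable_freePhase a 0 u)
    (measurable_freePhase a).stronglyMeasurable.stronglyMeasurableAtFilter
    (continuousAt_freePhase a hu)
  refine (hphase.comp_ofReal.sub hint).congr_deriv ?_
  simp only [U0, freePhase]
  field_simp
  ring_nf
  rw [Complex.I_sq]
  ring

lemma integral_U0 {a ε d : ℝ} (ha : a ≠ 0) (hε : 0 < ε) (hd : 0 < d) :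
    ∫ u in ε..d, U0 u a = 2 / (a : ℂ) ^ 2 * (freePrimitive a d - freePrimitive a ε) := by
  have hne : ∀ u ∈ uIcc ε d, u ≠ 0 := fun u hu => ((lt_min hε hd).trans_le hu.1).ne'
  have hFTC := intervalIntegral.integral_eq_sub_of_hasDerivAt
    (fun u hu => hasDerivAt_freePrimitive a (hne u hu))
    (ContinuousOn.intervalIntegrable fun u hu =>
      ((continuousAt_U0 a (hne u hu)).const_mul ((a : ℂ) ^ 2 / 2)).continuousWithinAt)
  rw [intervalIntegral.integral_const_mul] at hFTC
  have ha' : (a : ℂ) ≠ 0 := Complex.ofReal_ne_zero.2 ha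
  rw [← hFTC]
  field_simp

lemma freeImproper_eq {s τ a : ℝ} (hsτ : s < τ) (ha : a ≠ 0) :
    freeImproper s τ a = 2 / (a : ℂ) ^ 2 * freePrimitive a (τ - s) := by
  refine Tendsto.limUnder_eq ?_
  have hP : Tendsto (freePrimitive a) (nhdsWithin 0 (Ioi 0)) (nhds 0) := by
    simpa [freePrimitive] using
      ((continuous_freePrimitive a).tendsto 0).mono_left nhdsWithin_le_nhds
  have hlim := ((tendsto_const_nhds (x := freePrimitive a (τ - s))).sub hP).const_mul
    (2 / (a : ℂ) ^ 2)
  rw [sub_zero] at hlim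
  refine hlim.congr' ?_
  filter_upwards [Ioo_mem_nhdsGT (sub_pos.2 hsτ)] with ε hε
  rw [intervalIntegral.integral_comp_sub_left (fun u => U0 u a), sub_sub_cancel,
    integral_U0 ha hε.1 (sub_pos.2 hsτ)]

/-- For `t > s` and pairwise distinct centers, each entry `τ ↦ K_{jk}(t,τ)` of the
charge-equation kernel is Lebesgue integrable on `(s,t)`. -/
theorem chargeKernel_integrableOn
    {N : ℕ} (y : Fin N → EuclideanSpace ℝ (Fin 2))
    (hy : Function.Injective y) (α : Fin N → ℝ → ℝ)
    (hα : ∀ j, ContDiff ℝ 1 (α j)) (s t : ℝ) (hst : s < t) (j k : Fin N) :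
    IntegrableOn (fun τ => chargeKernel y α s t τ j k) (Set.Ioo s t) volume := by
  have hI := integrableOn_volterraI_sub hst
  by_cases hjk : j = k
  · subst hjk
    simp only [chargeKernel, if_true]
    refine Integrable.ofReal ?_
    have hα' : Continuous fun τ =>
        α j τ - 1 / (2 * π) * log 2 + eulerMascheroniConstant / (2 * π) :=
      ((hα j).continuous.sub continuous_const).add continuous_const
    exact IntegrableOn.mul_continuousOn_of_subset (hI.const_mul (4 * π)) hα'.continuousOn
      measurableSet_Ioo isCompact_Icc Ioo_subset_Icc_self
  · set a := ‖y j - y k‖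
    have ha : a ≠ 0 := norm_ne_zero_iff.2 (sub_ne_zero.2 (hy.ne hjk))
    have hP : Continuous fun τ => 2 / (a : ℂ) ^ 2 * freePrimitive a (τ - s) :=
      continuous_const.mul ((continuous_freePrimitive a).comp (continuous_sub_right s))
    refine (IntegrableOn.mul_continuousOn_of_subset (hI.ofReal.const_mul (-2 * Complex.I))
      hP.continuousOn measurableSet_Ioo isCompact_Icc Ioo_subset_Icc_self).congr_fun
      (fun τ hτ => ?_) measurableSet_Ioo
    rw [chargeKernel, if_neg hjk, freeImproper_eq hτ.1 ha]
    simp only [mul_assoc, RCLike.ofReal_eq_complex_ofReal]
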